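/- Let m ≥ 2, 0 ≤ β < 1, let k(z) = z + ∑_{n≥2} k_n z^n be bi-univalent with k₂ ≠ 0, k₃ ≠ 0 and 3k₃ − 2k₂² ≠ 0, and let f(z) = z + ∑_{n≥2} a_n z^n belong to the class C_m^k(β), i.e., BV^k(m; 1, β). Then |a₂| ≤ min{ √( m(1−β)/|6k₃ − 4k₂²| ) , m(1−β)/(2|k₂|) }. -/

import Mathlib

/-!
Write `F = f ∗ k` and `G = g ∗ k`; their Taylor coefficients are `aₙkₙ` and `bₙkₙ`. The
coefficients of `z` and `z²` in `1 + zF''/F'` are `2a₂k₂` and `6a₃k₃ - 4a₂²k₂²`, and membership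
in `P_m(β)` bounds every non-constant Taylor coefficient by `m(1 - β)`, because the non-constant
coefficients of the kernel `(1 - ze^{it})/(1 + ze^{it})` have modulus 2 and `‖μ‖ ≤ m/2`. Since `g = f⁻¹` has
`b₂ = -a₂` and `b₃ = 2a₂² - a₃`, adding the two `z²` bounds for `F` and `G` eliminates `a₃` and
gives `2|a₂|²|6k₃ - 4k₂²| ≤ 2m(1 - β)`; the `z` bound for `F` gives `2|a₂||k₂| ≤ m(1 - β)`.
-/

open MeasureTheory Set Metric Complex

noncomputable section

/-- The `n`-th MacLaurin coefficient of `f`, i.e. `f⁽ⁿ⁾(0)/n!`. -/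
def mc (f : ℂ → ℂ) (n : ℕ) : ℂ := iteratedDeriv n f 0 / (n.factorial : ℂ)

/-- The open unit disk in `ℂ`. -/
def unitDisk : Set ℂ := Metric.ball (0 : ℂ) 1

/-- The kernel `(1 - z e^{it})/(1 + z e^{it})`. -/
def pmKernel (z : ℂ) (t : ℝ) : ℂ :=
  (1 - z * Complex.exp (t * Complex.I)) / (1 + z * Complex.exp (t * Complex.I))

/-- The class `P_m` of functions with bounded boundary rotation: `p` is analytic on the unit
disk, `p 0 = 1`, and `p` is represented against a finite signed Borel measure
`μ = μp - μn` on `[0, 2π]` with `μ([0,2π]) = 1` and total variation `‖μ‖ ≤ m/2`. -/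
def MemPm (m : ℝ) (p : ℂ → ℂ) : Prop :=
  AnalyticOnNhd ℂ p unitDisk ∧ p 0 = 1 ∧
  ∃ μp μn : Measure ℝ, IsFiniteMeasure μp ∧ IsFiniteMeasure μn ∧
    (μp (Set.Icc 0 (2 * Real.pi))).toReal - (μn (Set.Icc 0 (2 * Real.pi))).toReal = 1 ∧
    (μp (Set.Icc 0 (2 * Real.pi))).toReal + (μn (Set.Icc 0 (2 * Real.pi))).toReal ≤ m / 2 ∧
    ∀ z ∈ unitDisk, p z =
      (∫ t in Set.Icc 0 (2 * Real.pi), pmKernel z t ∂μp) -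
      (∫ t in Set.Icc 0 (2 * Real.pi), pmKernel z t ∂μn)

/-- `p ∈ P_m(β)` iff `p = β + (1 - β) q` on the unit disk for some `q ∈ P_m`. -/
def MemPmBeta (m β : ℝ) (p : ℂ → ℂ) : Prop :=
  ∃ q : ℂ → ℂ, MemPm m q ∧ ∀ z ∈ unitDisk, p z = (β : ℂ) + (1 - (β : ℂ)) * q z

/-- `f` and `g` form a bi-univalent pair: `f` is analytic and injective on the unit disk with
`f 0 = 0`, `f' 0 = 1`, and `g` is the univalent analytic continuation of `f⁻¹` to the unit
disk: `g` is analytic and injective on the unit disk, `g 0 = 0`, and `f (g w) = w` for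
`|w| < 1/4`. -/
def BiUnivalentPair (f g : ℂ → ℂ) : Prop :=
  AnalyticOnNhd ℂ f unitDisk ∧ f 0 = 0 ∧ deriv f 0 = 1 ∧ Set.InjOn f unitDisk ∧
  AnalyticOnNhd ℂ g unitDisk ∧ Set.InjOn g unitDisk ∧ g 0 = 0 ∧
  ∀ w : ℂ, ‖w‖ < 1 / 4 → f (g w) = w

/-- MacLaurin coefficients of the Hadamard convolution `f ∗ k`. -/
def hadCoeff (f k : ℂ → ℂ) (n : ℕ) : ℂ :=
  if n = 0 then 0 else if n = 1 then 1 else mc f n * mc k n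

/-- The Hadamard convolution `F(z) = (f ∗ k)(z) = z + ∑_{n≥2} a_n k_n z^n`. -/
def hadFun (f k : ℂ → ℂ) (z : ℂ) : ℂ := ∑' n : ℕ, hadCoeff f k n * z ^ n

/-- The expression `1 + z F''(z)/F'(z)`. -/
def convexOp (F : ℂ → ℂ) (z : ℂ) : ℂ := 1 + z * deriv (deriv F) z / deriv F z

/-- `f ∈ C_m^k(β) = BV^k(m; 1, β)`: `f` is bi-univalent with inverse `g`, the convolutions
`F = f ∗ k` and `G = g ∗ k` converge on the unit disk, have non-vanishing derivative on the
disk, and both `1 + z F''/F'` and `1 + w G''/G'` belong to `P_m(β)`. -/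
def MemC (m β : ℝ) (k f g : ℂ → ℂ) : Prop :=
  BiUnivalentPair f g ∧
  (∀ z ∈ unitDisk, Summable fun n : ℕ => hadCoeff f k n * z ^ n) ∧
  (∀ w ∈ unitDisk, Summable fun n : ℕ => hadCoeff g k n * w ^ n) ∧
  (∀ z ∈ unitDisk, deriv (hadFun f k) z ≠ 0) ∧
  (∀ w ∈ unitDisk, deriv (hadFun g k) w ≠ 0) ∧
  MemPmBeta m β (convexOp (hadFun f k)) ∧ MemPmBeta m β (convexOp (hadFun g k))

open scoped ENNReal Topology

theorem mc_zero (f : ℂ → ℂ) : mc f 0 = f 0 := by simp [mc]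

theorem mc_one (f : ℂ → ℂ) : mc f 1 = deriv f 0 := by simp [mc]

theorem mc_two (f : ℂ → ℂ) : mc f 2 = deriv (deriv f) 0 / 2 := by
  simp [mc, iteratedDeriv_succ]

theorem mc_three (f : ℂ → ℂ) : mc f 3 = deriv (deriv (deriv f)) 0 / 6 := by
  simp [mc, iteratedDeriv_succ, Nat.factorial]

theorem hasFPowerSeriesOnBall_ofScalars_of_hasSum {F : ℂ → ℂ} {c : ℕ → ℂ} {r : ℝ≥0∞}
    (hr : 0 < r) (h : ∀ z ∈ eball (0 : ℂ) r, HasSum (fun n => c n * z ^ n) (F z)) :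
    HasFPowerSeriesOnBall F (FormalMultilinearSeries.ofScalars ℂ c) 0 r where
  r_le := by
    refine ENNReal.le_of_forall_nnreal_lt fun ρ hρ => ?_
    have hρ' : ((ρ : ℝ) : ℂ) ∈ eball (0 : ℂ) r := by
      simpa [mem_eball, enorm_eq_nnnorm] using hρ
    refine FormalMultilinearSeries.le_radius_of_tendsto _ (l := 0) ?_
    simpa [FormalMultilinearSeries.ofScalars_norm] using
      (h _ hρ').summable.tendsto_atTop_zero.norm
  r_pos := hr
  hasSum {z} hz := by
    simpa [FormalMultilinearSeries.ofScalars_apply_eq, mul_comm] using h z hz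

theorem mc_eq_of_hasFPowerSeriesAt {F : ℂ → ℂ} {c : ℕ → ℂ}
    (h : HasFPowerSeriesAt F (FormalMultilinearSeries.ofScalars ℂ c) 0) : mc F = c :=
  FormalMultilinearSeries.ofScalars_series_injective ℂ ℂ
    (h.analyticAt.hasFPowerSeriesAt.eq_formalMultilinearSeries h)

theorem hasFPowerSeriesOnBall_ofScalars_of_hasSum_unitDisk {F : ℂ → ℂ} {c : ℕ → ℂ}
    (h : ∀ z ∈ unitDisk, HasSum (fun n => c n * z ^ n) (F z)) :
    HasFPowerSeriesOnBall F (FormalMultilinearSeries.ofScalars ℂ c) 0 1 :=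
  hasFPowerSeriesOnBall_ofScalars_of_hasSum one_pos fun z hz =>
    h z (by simpa [unitDisk, ← eball_ofReal] using hz)

theorem mc_const_add_mul_succ {h : ℂ → ℂ} (hh : AnalyticAt ℂ h 0) (c : ℂ) (n : ℕ) :
    mc (fun z => c + z * h z) (n + 1) = mc h n := by
  obtain ⟨r, hr⟩ := hh.hasFPowerSeriesAt
  have hshift : HasFPowerSeriesOnBall (fun z => c + z * h z)
      (FormalMultilinearSeries.ofScalars ℂ fun k => if k = 0 then c else mc h (k - 1)) 0 r := by
    refine hasFPowerSeriesOnBall_ofScalars_of_hasSum hr.r_pos fun z hz => ?_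
    have hsum : HasSum (fun k => mc h k * z ^ k) (h z) := by
      simpa [FormalMultilinearSeries.ofScalars_apply_eq, mc, mul_comm] using hr.hasSum hz
    refine (hasSum_nat_add_iff' 1).mp ?_
    simpa [pow_succ, mul_left_comm, mul_comm] using hsum.mul_left z
  exact congrFun (mc_eq_of_hasFPowerSeriesAt hshift.hasFPowerSeriesAt) (n + 1)

theorem hasFPowerSeriesOnBall_hadFun {f k : ℂ → ℂ}
    (hs : ∀ z ∈ unitDisk, Summable fun n => hadCoeff f k n * z ^ n) :
    HasFPowerSeriesOnBall (hadFun f k) (FormalMultilinearSeries.ofScalars ℂ (hadCoeff f k)) 0 1 :=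
  hasFPowerSeriesOnBall_ofScalars_of_hasSum_unitDisk fun z hz => (hs z hz).hasSum

theorem mc_convexOp {F : ℂ → ℂ} (hF : AnalyticAt ℂ F 0) (hF1 : deriv F 0 = 1) :
    mc (convexOp F) 1 = 2 * mc F 2 ∧ mc (convexOp F) 2 = 6 * mc F 3 - 4 * mc F 2 ^ 2 := by
  set h := fun z => deriv (deriv F) z / deriv F z with h_def
  have hF1' : deriv F 0 ≠ 0 := by rw [hF1]; exact one_ne_zero
  have hh : AnalyticAt ℂ h 0 := hF.deriv.deriv.div hF.deriv hF1'
  have hconv : convexOp F = fun z => 1 + z * h z := by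
    funext z; simp only [convexOp, h_def, mul_div_assoc]
  have hh' : deriv h 0 = deriv (deriv (deriv F)) 0 - deriv (deriv F) 0 ^ 2 := by
    rw [h_def, deriv_fun_div hF.deriv.deriv.differentiableAt hF.deriv.differentiableAt hF1', hF1]
    ring
  have e1 : mc (convexOp F) 1 = mc h 0 := by rw [hconv]; exact mc_const_add_mul_succ hh 1 0
  have e2 : mc (convexOp F) 2 = mc h 1 := by rw [hconv]; exact mc_const_add_mul_succ hh 1 1
  rw [e1, e2, mc_zero, mc_one, hh', mc_two, mc_three]
  exact ⟨by simp only [h_def, hF1, div_one]; ring, by ring⟩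

theorem mc_convexOp_hadFun {f k : ℂ → ℂ}
    (hs : ∀ z ∈ unitDisk, Summable fun n => hadCoeff f k n * z ^ n) :
    mc (convexOp (hadFun f k)) 1 = 2 * (mc f 2 * mc k 2) ∧
      mc (convexOp (hadFun f k)) 2 = 6 * (mc f 3 * mc k 3) - 4 * (mc f 2 * mc k 2) ^ 2 := by
  have hF := hasFPowerSeriesOnBall_hadFun hs
  have hmc : mc (hadFun f k) = hadCoeff f k := mc_eq_of_hasFPowerSeriesAt hF.hasFPowerSeriesAt
  have hF1 : deriv (hadFun f k) 0 = 1 := by rw [← mc_one, hmc]; rfl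
  simpa [hmc, hadCoeff] using mc_convexOp hF.analyticAt hF1

def pmKernelCoeff (n : ℕ) (t : ℝ) : ℂ := if n = 0 then 1 else 2 * (-exp (t * I)) ^ n

theorem norm_pmKernelCoeff_le (n : ℕ) (t : ℝ) : ‖pmKernelCoeff n t‖ ≤ 2 := by
  unfold pmKernelCoeff; split_ifs <;> simp [norm_exp_ofReal_mul_I]

theorem continuous_pmKernelCoeff (n : ℕ) : Continuous (pmKernelCoeff n) := by
  unfold pmKernelCoeff; split_ifs <;> fun_prop

-- `(1 + w)/(1 - w) = 2/(1 - w) - 1` expanded geometrically, with `w = -z e^{it}`.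
theorem hasSum_pmKernel {z : ℂ} (hz : ‖z‖ < 1) (t : ℝ) :
    HasSum (fun n => pmKernelCoeff n t * z ^ n) (pmKernel z t) := by
  set w := -exp (t * I) * z
  have hw : ‖w‖ < 1 := by simpa [w, norm_exp_ofReal_mul_I] using hz
  have hw1 : 1 - w ≠ 0 := fun h => by
    rw [← eq_of_sub_eq_zero h, norm_one] at hw; exact lt_irrefl _ hw
  have hterm : (fun n => pmKernelCoeff n t * z ^ n) =
      fun n => 2 * w ^ n - if n = 0 then 1 else 0 := by
    funext n
    rcases n with _ | n
    · norm_num [pmKernelCoeff]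
    · simp [pmKernelCoeff, w, ← mul_pow, mul_assoc]
  have hval : pmKernel z t = 2 * (1 - w)⁻¹ - 1 := by
    rw [pmKernel, show 1 + z * exp (t * I) = 1 - w by simp [w, mul_comm]]
    field_simp
    simp [w]; ring
  rw [hterm, hval]
  exact ((hasSum_geometric_of_norm_lt_one hw).mul_left 2).sub (hasSum_ite_eq 0 1)

theorem hasSum_integral_pmKernel (ν : Measure ℝ) [IsFiniteMeasure ν] {z : ℂ} (hz : ‖z‖ < 1) :
    HasSum (fun n => (∫ t, pmKernelCoeff n t ∂ν) * z ^ n) (∫ t, pmKernel z t ∂ν) := by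
  have hbound : ∀ n t, ‖pmKernelCoeff n t * z ^ n‖ ≤ 2 * ‖z‖ ^ n := fun n t => by
    rw [norm_mul, norm_pow]; gcongr; exact norm_pmKernelCoeff_le n t
  have hint : ∀ n, Integrable (fun t => pmKernelCoeff n t * z ^ n) ν := fun n =>
    .of_bound ((continuous_pmKernelCoeff n).mul continuous_const).aestronglyMeasurable _
      (.of_forall (hbound n))
  have hsum : Summable fun n => ∫ t, ‖pmKernelCoeff n t * z ^ n‖ ∂ν := by
    refine .of_nonneg_of_le (fun n => integral_nonneg fun t => norm_nonneg _) (fun n => ?_)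
      ((summable_geometric_of_lt_one (norm_nonneg z) hz).mul_left (2 * ν.real univ))
    calc ∫ t, ‖pmKernelCoeff n t * z ^ n‖ ∂ν ≤ ∫ _, 2 * ‖z‖ ^ n ∂ν :=
          integral_mono (hint n).norm (integrable_const _) (hbound n)
      _ = 2 * ν.real univ * ‖z‖ ^ n := by simp; ring
  simpa [integral_mul_const, (hasSum_pmKernel hz _).tsum_eq] using
    hasSum_integral_of_summable_integral_norm hint hsum

theorem norm_integral_pmKernelCoeff_le (ν : Measure ℝ) [IsFiniteMeasure ν] (n : ℕ) :
    ‖∫ t, pmKernelCoeff n t ∂ν‖ ≤ 2 * ν.real univ := by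
  simpa [mul_comm] using norm_integral_le_of_norm_le_const (μ := ν)
    (.of_forall (norm_pmKernelCoeff_le n))

theorem norm_mc_le_of_memPm {m : ℝ} {q : ℂ → ℂ} (hq : MemPm m q) (n : ℕ) : ‖mc q n‖ ≤ m := by
  obtain ⟨-, -, μp, μn, _, _, -, hvar, hrep⟩ := hq
  set s := Icc 0 (2 * Real.pi)
  have hmc : mc q = fun n =>
      (∫ t in s, pmKernelCoeff n t ∂μp) - ∫ t in s, pmKernelCoeff n t ∂μn := by
    refine mc_eq_of_hasFPowerSeriesAt
      (hasFPowerSeriesOnBall_ofScalars_of_hasSum_unitDisk fun z hz => ?_).hasFPowerSeriesAt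
    have hz' : ‖z‖ < 1 := by simpa [unitDisk] using hz
    simpa [hrep z hz, sub_mul] using
      (hasSum_integral_pmKernel _ hz').sub (hasSum_integral_pmKernel _ hz')
  calc ‖mc q n‖ ≤ ‖∫ t in s, pmKernelCoeff n t ∂μp‖ + ‖∫ t in s, pmKernelCoeff n t ∂μn‖ := by
        rw [hmc]; exact norm_sub_le _ _
    _ ≤ 2 * (μp s).toReal + 2 * (μn s).toReal := by
        gcongr
        · simpa [measureReal_def] using norm_integral_pmKernelCoeff_le (μp.restrict s) n
        · simpa [measureReal_def] using norm_integral_pmKernelCoeff_le (μn.restrict s) n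
    _ ≤ m := by linarith

theorem norm_mc_le_of_memPmBeta {m β : ℝ} (hβ : β ≤ 1) {p : ℂ → ℂ} (hp : MemPmBeta m β p)
    {n : ℕ} (hn : n ≠ 0) : ‖mc p n‖ ≤ m * (1 - β) := by
  obtain ⟨q, hq, hpq⟩ := hp
  have hev : p =ᶠ[𝓝 0] fun z => (β : ℂ) + (1 - β) * q z :=
    Filter.eventually_of_mem (isOpen_ball.mem_nhds (mem_ball_self one_pos)) hpq
  have hmc : mc p n = (1 - β) * mc q n := by
    simp only [mc, hev.iteratedDeriv_eq, iteratedDeriv_const_add (Nat.pos_of_ne_zero hn),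
      iteratedDeriv_const_mul_field, mul_div_assoc]
  rw [hmc, norm_mul, mul_comm, show ‖(1 : ℂ) - β‖ = 1 - β by
    rw [← ofReal_one, ← ofReal_sub, norm_real, Real.norm_of_nonneg (by linarith)]]
  exact mul_le_mul_of_nonneg_right (norm_mc_le_of_memPm hq n) (by linarith)

theorem mc_two_three_of_comp_eq_id {f g : ℂ → ℂ} (hf : AnalyticAt ℂ f 0) (hg : AnalyticAt ℂ g 0)
    (hg0 : g 0 = 0) (hf1 : deriv f 0 = 1) (hfg : f ∘ g =ᶠ[𝓝 0] id) :
    mc g 2 = -mc f 2 ∧ mc g 3 = 2 * mc f 2 ^ 2 - mc f 3 := by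
  have hg_tendsto : Filter.Tendsto g (𝓝 0) (𝓝 0) := by
    simpa [hg0] using hg.continuousAt.tendsto
  have hfg' : ∀ᶠ z in 𝓝 0, AnalyticAt ℂ f (g z) := hg_tendsto.eventually hf.eventually_analyticAt
  have hg' : ∀ᶠ z in 𝓝 0, AnalyticAt ℂ g z := hg.eventually_analyticAt
  have h1 : (fun z => deriv f (g z) * deriv g z) =ᶠ[𝓝 0] fun _ => 1 := by
    filter_upwards [hfg.deriv, hfg', hg'] with z hz hfz hgz
    rw [← deriv_comp z hfz.differentiableAt hgz.differentiableAt, hz, deriv_id]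
  have h2 : (fun z => deriv (deriv f) (g z) * deriv g z ^ 2 + deriv f (g z) * deriv (deriv g) z)
      =ᶠ[𝓝 0] fun _ => 0 := by
    filter_upwards [h1.deriv, hfg', hg'] with z hz hfz hgz
    have hd : HasDerivAt (fun w => deriv f (g w) * deriv g w)
        (deriv (deriv f) (g z) * deriv g z * deriv g z + deriv f (g z) * deriv (deriv g) z) z :=
      (hfz.deriv.differentiableAt.hasDerivAt.comp z hgz.differentiableAt.hasDerivAt).mul
        hgz.deriv.differentiableAt.hasDerivAt
    rw [hd.deriv, deriv_const] at hz
    linear_combination hz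
  have h3 : HasDerivAt
      (fun z => deriv (deriv f) (g z) * deriv g z ^ 2 + deriv f (g z) * deriv (deriv g) z)
      (deriv (deriv (deriv f)) 0 * deriv g 0 ^ 3 + 3 * deriv (deriv f) 0 * deriv g 0 *
        deriv (deriv g) 0 + deriv f 0 * deriv (deriv (deriv g)) 0) 0 := by
    refine (((hf.deriv.deriv.differentiableAt.hasDerivAt.comp_of_eq 0
      hg.differentiableAt.hasDerivAt hg0.symm).fun_mul
        (hg.deriv.differentiableAt.hasDerivAt.fun_pow 2)).fun_add
      ((hf.deriv.differentiableAt.hasDerivAt.comp_of_eq 0 hg.differentiableAt.hasDerivAt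
        hg0.symm).fun_mul hg.deriv.deriv.differentiableAt.hasDerivAt)).congr_deriv ?_
    simp only [Function.comp_apply, hg0]; ring
  have e1 := h1.self_of_nhds
  have e2 := h2.self_of_nhds
  have e3 := h3.deriv.symm.trans (h2.deriv.self_of_nhds.trans (deriv_const 0 0))
  simp only [hg0, hf1, one_mul] at e1 e2 e3
  simp only [e1] at e2 e3
  rw [mc_two, mc_two, mc_three, mc_three]
  constructor
  · linear_combination e2 / 2
  · linear_combination e3 / 6 - deriv (deriv f) 0 * e2 / 2

theorem norm_le_min_of_coeff_bounds {a₂ a₃ k₂ k₃ : ℂ} {M : ℝ} (hk₂ : k₂ ≠ 0)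
    (hD : 3 * k₃ - 2 * k₂ ^ 2 ≠ 0) (h₁ : ‖2 * (a₂ * k₂)‖ ≤ M)
    (h₂ : ‖6 * (a₃ * k₃) - 4 * (a₂ * k₂) ^ 2‖ ≤ M)
    (h₂' : ‖6 * ((2 * a₂ ^ 2 - a₃) * k₃) - 4 * (-a₂ * k₂) ^ 2‖ ≤ M) :
    ‖a₂‖ ≤ min (√(M / ‖6 * k₃ - 4 * k₂ ^ 2‖)) (M / (2 * ‖k₂‖)) := by
  have hD' : 0 < ‖6 * k₃ - 4 * k₂ ^ 2‖ :=
    norm_pos_iff.mpr fun h => hD (by linear_combination h / 2)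
  have hsum : 2 * (‖a₂‖ ^ 2 * ‖6 * k₃ - 4 * k₂ ^ 2‖) ≤ 2 * M := calc
    2 * (‖a₂‖ ^ 2 * ‖6 * k₃ - 4 * k₂ ^ 2‖) = ‖(6 * (a₃ * k₃) - 4 * (a₂ * k₂) ^ 2) +
        (6 * ((2 * a₂ ^ 2 - a₃) * k₃) - 4 * (-a₂ * k₂) ^ 2)‖ := by
      rw [show (6 * (a₃ * k₃) - 4 * (a₂ * k₂) ^ 2) +
        (6 * ((2 * a₂ ^ 2 - a₃) * k₃) - 4 * (-a₂ * k₂) ^ 2) =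
          2 * (a₂ ^ 2 * (6 * k₃ - 4 * k₂ ^ 2)) by ring]
      simp
    _ ≤ 2 * M := by linarith [norm_add_le_of_le h₂ h₂']
  have h₁' : 2 * (‖a₂‖ * ‖k₂‖) ≤ M := by simpa [norm_mul] using h₁
  refine le_min (Real.le_sqrt_of_sq_le ((le_div_iff₀ hD').mpr (by linarith))) ?_
  rw [le_div_iff₀ (by positivity)]
  linarith

theorem C_a2_bound_general (m β : ℝ) (hβ1 : β < 1)
    (k f g : ℂ → ℂ)
    (hk2 : mc k 2 ≠ 0)
    (hD : 3 * mc k 3 - 2 * mc k 2 ^ 2 ≠ 0)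
    (hf : MemC m β k f g) :
    ‖mc f 2‖ ≤
      min (Real.sqrt (m * (1 - β) / ‖6 * mc k 3 - 4 * mc k 2 ^ 2‖))
        (m * (1 - β) / (2 * ‖mc k 2‖)) := by
  obtain ⟨⟨hfa, -, hf1, -, hga, -, hg0, hfg⟩, hsf, hsg, -, -, hPF, hPG⟩ := hf
  have h0 : (0 : ℂ) ∈ unitDisk := mem_ball_self one_pos
  have hfg' : f ∘ g =ᶠ[𝓝 0] id :=
    Filter.eventually_of_mem (ball_mem_nhds 0 (by norm_num : (0 : ℝ) < 1 / 4))
      fun w hw => hfg w (by simpa using hw)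
  obtain ⟨hg2, hg3⟩ := mc_two_three_of_comp_eq_id (hfa 0 h0) (hga 0 h0) hg0 hf1 hfg'
  obtain ⟨hF1, hF2⟩ := mc_convexOp_hadFun hsf
  obtain ⟨-, hG2⟩ := mc_convexOp_hadFun hsg
  rw [hg2, hg3] at hG2
  exact norm_le_min_of_coeff_bounds hk2 hD
    (hF1 ▸ norm_mc_le_of_memPmBeta hβ1.le hPF one_ne_zero)
    (hF2 ▸ norm_mc_le_of_memPmBeta hβ1.le hPF two_ne_zero)
    (hG2 ▸ norm_mc_le_of_memPmBeta hβ1.le hPG two_ne_zero)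

/-- Corollary 2.4, bound for `|a₂|` in the class `C_m^k(β) = BV^k(m; 1, β)`. -/
theorem C_a2_bound (m β : ℝ) (hm : 2 ≤ m) (hβ0 : 0 ≤ β) (hβ1 : β < 1)
    (k kinv f g : ℂ → ℂ) (hk : BiUnivalentPair k kinv)
    (hk2 : mc k 2 ≠ 0) (hk3 : mc k 3 ≠ 0)
    (hD : 3 * mc k 3 - 2 * mc k 2 ^ 2 ≠ 0)
    (hf : MemC m β k f g) :
    ‖mc f 2‖ ≤
      min (Real.sqrt (m * (1 - β) / ‖6 * mc k 3 - 4 * mc k 2 ^ 2‖))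
        (m * (1 - β) / (2 * ‖mc k 2‖)) :=
  C_a2_bound_general m β hβ1 k f g hk2 hD hf
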